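/- Let D = (G, O, w) be a weighted oriented graph where G is an SCQ graph with partition given by the simplexes S_G, the basic 5-cycles C_G and the matching Q_G, and let C be a vertex cover of D. Then |C| = τ(G) if and only if |C ∩ V(K)| = |V(K)| − 1 for every K ∈ S_G, |C ∩ V(C′)| = 3 for every C′ ∈ C_G, and |C ∩ e| = 1 for every e ∈ Q_G. -/

import Mathlib

/-! ## Weighted oriented graphs -/

/-- A weighted oriented graph `D = (G, 𝒪, w)`: an orientation of a finite simple
graph together with a weight function, where sources have weight `1`. -/
structure WOGraph (V : Type) where
  /-- the set of directed edges -/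
  E : V → V → Prop
  irrefl : ∀ x, ¬ E x x
  asymm : ∀ x y, E x y → ¬ E y x
  /-- the weight function -/
  w : V → ℕ
  w_pos : ∀ x, 1 ≤ w x
  source_one : ∀ x, (∀ y, ¬ E y x) → w x = 1

namespace WOGraph

variable {V : Type}

/-- The underlying simple graph `G` of `D`. -/
def graph (D : WOGraph V) : SimpleGraph V := SimpleGraph.fromRel D.E

/-- Out-neighbourhood `N⁺_D(x)`. -/
def outN (D : WOGraph V) (x : V) : Set V := {y | D.E x y}

/-- In-neighbourhood `N⁻_D(x)`. -/
def inN (D : WOGraph V) (x : V) : Set V := {y | D.E y x}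

/-- Neighbourhood `N_D(x)`. -/
def nbr (D : WOGraph V) (x : V) : Set V := {y | D.E x y ∨ D.E y x}

/-- `N_D(A)` for a set `A` of vertices. -/
def nbrS (D : WOGraph V) (A : Set V) : Set V := {y | ∃ a ∈ A, y ∈ D.nbr a}

/-- `N⁺_D(A)` for a set `A` of vertices. -/
def outNS (D : WOGraph V) (A : Set V) : Set V := {y | ∃ a ∈ A, D.E a y}

/-- `V⁺`, the set of vertices of weight `> 1`. -/
def Vplus (D : WOGraph V) : Set V := {x | 1 < D.w x}

/-- A vertex cover of `D`. -/
def IsVC (D : WOGraph V) (C : Set V) : Prop := ∀ u v, D.E u v → u ∈ C ∨ v ∈ C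

/-- `L₁(C)`. -/
def L1 (D : WOGraph V) (C : Set V) : Set V := {x | x ∈ C ∧ ∃ y, D.E x y ∧ y ∉ C}

/-- `L₂(C)`. -/
def L2 (D : WOGraph V) (C : Set V) : Set V :=
  {x | x ∈ C ∧ x ∉ D.L1 C ∧ ∃ y, D.E y x ∧ y ∉ C}

/-- `L₃(C)`. -/
def L3 (D : WOGraph V) (C : Set V) : Set V := {x | x ∈ C ∧ x ∉ D.L1 C ∧ x ∉ D.L2 C}

/-- A strong vertex cover of `D`. -/
def IsStrongVC (D : WOGraph V) (C : Set V) : Prop :=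
  D.IsVC C ∧ ∀ x ∈ D.L3 C, ∃ y, D.E y x ∧ y ∈ C ∧ y ∉ D.L1 C ∧ 1 < D.w y

/-- A weighted oriented subgraph of `D`. -/
structure OSub (D : WOGraph V) where
  verts : Set V
  E : V → V → Prop
  sub : ∀ u v, E u v → D.E u v
  memL : ∀ u v, E u v → u ∈ verts
  memR : ∀ u v, E u v → v ∈ verts

namespace OSub

variable {D : WOGraph V}

/-- The underlying simple graph of a weighted oriented subgraph. -/
def graph (H : D.OSub) : SimpleGraph V := SimpleGraph.fromRel H.E

/-- Neighbourhood inside the subgraph. -/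
def nbr (H : D.OSub) (x : V) : Set V := {y | H.E x y ∨ H.E y x}

/-- Degree inside the subgraph. -/
noncomputable def deg (H : D.OSub) (x : V) : ℕ := (H.nbr x).ncard

/-- `H` is contained in `K`. -/
def le (H K : D.OSub) : Prop := H.verts ⊆ K.verts ∧ ∀ u v, H.E u v → K.E u v

end OSub

/-- The induced weighted oriented subgraph on a set `A` of vertices. -/
def induced (D : WOGraph V) (A : Set V) : D.OSub where
  verts := A
  E u v := D.E u v ∧ u ∈ A ∧ v ∈ A
  sub _ _ h := h.1
  memL _ _ h := h.2.1
  memR _ _ h := h.2.2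

/-- `K` is an induced weighted oriented subgraph of `D`. -/
def IsInducedSub {D : WOGraph V} (K : D.OSub) : Prop :=
  ∀ u v, D.E u v → u ∈ K.verts → v ∈ K.verts → K.E u v

/-- A root oriented tree (ROT) with parent `v`. -/
def IsROT (D : WOGraph V) (T : D.OSub) (v : V) : Prop :=
  v ∈ T.verts ∧ T.graph.IsAcyclic ∧
  (∀ x ∈ T.verts, Relation.ReflTransGen T.E v x) ∧
  (∀ x ∈ T.verts, D.w x = 1 → (T.deg x = 1 ∧ x ≠ v) ∨ (T.verts = {v} ∧ x = v))

/-- A unicycle oriented subgraph whose (unique) cycle has vertex set `Cs`. -/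
def IsUnicycle (D : WOGraph V) (B : D.OSub) (Cs : Set V) : Prop :=
  (∃ (n : ℕ) (f : ZMod n → V), 3 ≤ n ∧ Function.Injective f ∧ Set.range f = Cs ∧
      ∀ i, B.E (f i) (f (i + 1))) ∧
  (∀ (a : V) (p : B.graph.Walk a a), p.IsCycle → {x | x ∈ p.support} = Cs) ∧
  (∀ y ∈ B.verts, y ∉ Cs → ∃ x ∈ Cs, Relation.ReflTransGen B.E x y) ∧
  (∀ x ∈ B.verts, D.w x = 1 → B.deg x = 1)

/-- A `⋆`-semi-forest structure on a weighted oriented subgraph `H` of `D`. -/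
structure SSF (D : WOGraph V) (H : D.OSub) where
  r : ℕ
  s : ℕ
  T : Fin r → D.OSub
  parent : Fin r → V
  B : Fin s → D.OSub
  Cs : Fin s → Set V
  hT : ∀ i, D.IsROT (T i) (parent i)
  hB : ∀ j, D.IsUnicycle (B j) (Cs j)
  hverts : H.verts = (⋃ i, (T i).verts) ∪ (⋃ j, (B j).verts)
  hE : ∀ u v, H.E u v ↔ ((∃ i, (T i).E u v) ∨ (∃ j, (B j).E u v))
  hTT : ∀ i i', i ≠ i' → Disjoint (T i).verts (T i').verts
  hBB : ∀ j j', j ≠ j' → Disjoint (B j).verts (B j').verts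
  hTB : ∀ i j, Disjoint (T i).verts (B j).verts
  wv : Fin r → V
  hwv_not : ∀ i, wv i ∉ H.verts
  hwv_nbr : ∀ i, wv i ∈ D.nbr (parent i)
  W1 : Set V
  W2 : Set V
  hW_union : W1 ∪ W2 = Set.range wv
  hW_disj : Disjoint W1 W2
  hW1_stable : ∀ x ∈ W1, ∀ y ∈ W1, ¬ D.graph.Adj x y
  hW2_plus : W2 ⊆ D.Vplus
  hW2_edge : ∀ i, wv i ∈ W2 → D.E (wv i) (parent i)
  hW1_out : D.outNS (W2 ∪ ({x | x ∈ H.verts ∧ 2 ≤ H.deg x} ∪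
      {x | (∃ i, parent i = x) ∧ H.deg x = 1})) ∩ W1 = ∅

/-- The set `H̃` associated with a `⋆`-semi-forest. -/
noncomputable def SSF.tilde {D : WOGraph V} {H : D.OSub} (F : D.SSF H) : Set V :=
  {x | x ∈ H.verts ∧ 2 ≤ H.deg x} ∪ {x | (∃ i, F.parent i = x) ∧ H.deg x = 1}

/-- `K` has a generating `⋆`-semi-forest. -/
def HasGenSSF (D : WOGraph V) (K : D.OSub) : Prop :=
  ∃ H : D.OSub, Nonempty (D.SSF H) ∧ H.verts = K.verts

/-- The `⋆`-condition for a 5-tuple `(a', a, b, b', c)` written along an induced 5-cycle. -/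
def StarCond (D : WOGraph V) (a' a b b' c : V) : Prop :=
  (D.E a' a ∧ D.w a' = 1) ∧
  (D.inN a ⊆ D.nbr c ∧ D.inN a ∩ D.Vplus ⊆ D.inN c) ∧
  (D.nbr b' ⊆ D.nbr a' ∪ D.outN a ∧ D.inN b' ∩ D.Vplus ⊆ D.inN a')

/-- The `⋆`-property for an induced 5-cycle `z 0, z 1, z 2, z 3, z 4`. -/
def HasStarProp (D : WOGraph V) (z : Fin 5 → V) : Prop :=
  ∀ i : Fin 5,
    (D.E (z i) (z (i + 1)) ∧ 1 < D.w (z i) →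
      StarCond D (z (i - 1)) (z i) (z (i + 1)) (z (i + 2)) (z (i + 3))) ∧
    (D.E (z (i + 1)) (z i) ∧ 1 < D.w (z (i + 1)) →
      StarCond D (z (i + 2)) (z (i + 1)) (z i) (z (i - 1)) (z (i - 2)))

/-- The edge ideal `I(D)` of a weighted oriented graph in `k[x_v : v ∈ V]`. -/
noncomputable def edgeIdeal (k : Type) [Field k] (D : WOGraph V) : Ideal (MvPolynomial V k) :=
  Ideal.span {f | ∃ u v, D.E u v ∧ f = MvPolynomial.X u * MvPolynomial.X v ^ D.w v}

end WOGraph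

/-! ## Generic graph notions -/

/-- A vertex cover of a simple graph. -/
def gVC {W : Type} (G : SimpleGraph W) (C : Set W) : Prop :=
  ∀ u v, G.Adj u v → u ∈ C ∨ v ∈ C

/-- The vertex cover number `τ(G)`. -/
noncomputable def tau {W : Type} (G : SimpleGraph W) : ℕ :=
  sInf {n | ∃ C : Set W, gVC G C ∧ C.ncard = n}

/-- A stable (independent) set. -/
def Stable {W : Type} (G : SimpleGraph W) (S : Set W) : Prop :=
  ∀ x ∈ S, ∀ y ∈ S, ¬ G.Adj x y

/-- `G` is well-covered: all maximal stable sets have the same cardinality. -/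
def WellCovered {W : Type} (G : SimpleGraph W) : Prop :=
  ∀ S T : Set W, Maximal (Stable G) S → Maximal (Stable G) T → S.ncard = T.ncard

/-- `e` is (the vertex set of) an edge of `G`. -/
def IsEdgeSet {W : Type} (G : SimpleGraph W) (e : Set W) : Prop :=
  ∃ u v, G.Adj u v ∧ e = {u, v}

/-- An edge `e = {b, b'}` has the property (P). -/
def PropP {W : Type} (G : SimpleGraph W) (e : Set W) : Prop :=
  ∀ a b a' b', e = {b, b'} → G.Adj a b → G.Adj a' b' → a ∉ e → a' ∉ e → G.Adj a a'

/-- A matching of `G`, as a set of (vertex sets of) edges. -/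
def IsMatchingSet {W : Type} (G : SimpleGraph W) (M : Set (Set W)) : Prop :=
  (∀ e ∈ M, IsEdgeSet G e) ∧ M.Pairwise Disjoint

/-- A perfect matching of `G`. -/
def IsPerfectMatchingSet {W : Type} (G : SimpleGraph W) (M : Set (Set W)) : Prop :=
  IsMatchingSet G M ∧ ⋃₀ M = Set.univ

/-- The matching number `ν(G)`. -/
noncomputable def nu {W : Type} (G : SimpleGraph W) : ℕ :=
  sSup {n | ∃ M, IsMatchingSet G M ∧ M.ncard = n}

/-- The degree of a vertex. -/
noncomputable def gdeg {W : Type} (G : SimpleGraph W) (x : W) : ℕ := (G.neighborSet x).ncard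

/-- `v` is a simplicial vertex: its closed neighbourhood is a clique. -/
def IsSimplicialVtx {W : Type} (G : SimpleGraph W) (v : W) : Prop :=
  G.IsClique (insert v (G.neighborSet v))

/-- The set `S_G` of (vertex sets of) simplexes of `G`. -/
def SimplexSets {W : Type} (G : SimpleGraph W) : Set (Set W) :=
  {S | ∃ v, IsSimplicialVtx G v ∧ S = insert v (G.neighborSet v)}

/-- `G` is a simplicial graph. -/
def SimplicialGraph {W : Type} (G : SimpleGraph W) : Prop :=
  ∀ v, IsSimplicialVtx G v ∨ ∃ u, G.Adj v u ∧ IsSimplicialVtx G u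

/-- The cycle graph on `ZMod n`. -/
def cycGraph (n : ℕ) : SimpleGraph (ZMod n) := SimpleGraph.fromRel (fun i j => j = i + 1)

/-- `G` is chordal: it has no induced cycles of length `≥ 4`. -/
def Chordal {W : Type} (G : SimpleGraph W) : Prop :=
  ∀ n : ℕ, 4 ≤ n → ∀ A : Set W, IsEmpty (G.induce A ≃g cycGraph n)

/-- `G` has a cycle of length `k`. -/
def HasCycleLen {W : Type} (G : SimpleGraph W) (k : ℕ) : Prop :=
  ∃ (a : W) (p : G.Walk a a), p.IsCycle ∧ p.length = k

/-- `z 0, z 1, z 2, z 3, z 4` is an induced 5-cycle of `G`. -/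
def IsInduced5Cycle {W : Type} (G : SimpleGraph W) (z : Fin 5 → W) : Prop :=
  Function.Injective z ∧ ∀ i j : Fin 5, G.Adj (z i) (z j) ↔ (j = i + 1 ∨ i = j + 1)

/-- A basic 5-cycle: an induced 5-cycle without two adjacent vertices of degree `≥ 3`. -/
def IsBasic5Cycle {W : Type} (G : SimpleGraph W) (z : Fin 5 → W) : Prop :=
  IsInduced5Cycle G z ∧ ∀ i : Fin 5, ¬ (3 ≤ gdeg G (z i) ∧ 3 ≤ gdeg G (z (i + 1)))

/-- The set `C_G` of (vertex sets of) basic 5-cycles of `G`. -/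
def Basic5Sets {W : Type} (G : SimpleGraph W) : Set (Set W) :=
  {A | ∃ z : Fin 5 → W, IsBasic5Cycle G z ∧ A = Set.range z}

/-- The clique number `ω(G)`. -/
noncomputable def cliqueNum' {W : Type} (G : SimpleGraph W) : ℕ :=
  sSup {n | ∃ s : Set W, G.IsClique s ∧ s.ncard = n}

/-- `G` is a perfect graph. -/
def IsPerfectGraph {W : Type} (G : SimpleGraph W) : Prop :=
  ∀ A : Set W, (G.induce A).chromaticNumber = (cliqueNum' (G.induce A) : ℕ∞)

/-- A `τ`-reduction of `G` into the induced subgraphs on the `A i`. -/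
noncomputable def TauReduction {W : Type} (G : SimpleGraph W) (s : ℕ) (A : Fin s → Set W) : Prop :=
  (∀ i j, i ≠ j → Disjoint (A i) (A j)) ∧ (⋃ i, A i) = Set.univ ∧
  tau G = ∑ i, tau (G.induce (A i))

/-- `G` is an SCQ graph witnessed by the matching `Q`. -/
def IsSCQ {V : Type} (D : WOGraph V) (Q : Set (Set V)) : Prop :=
  (Q = ∅ ∨ (IsMatchingSet D.graph Q ∧ ∀ e ∈ Q, PropP D.graph e)) ∧
  (∀ A ∈ SimplexSets D.graph ∪ Basic5Sets D.graph ∪ Q,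
    ∀ B ∈ SimplexSets D.graph ∪ Basic5Sets D.graph ∪ Q, A = B ∨ Disjoint A B) ∧
  ⋃₀ (SimplexSets D.graph ∪ Basic5Sets D.graph ∪ Q) = Set.univ

/-- An ideal is unmixed if all its associated primes have the same height. -/
def IsUnmixed {R : Type} [CommRing R] (I : Ideal R) : Prop :=
  ∀ p q : Ideal R, p ∈ associatedPrimes R (R ⧸ I) → q ∈ associatedPrimes R (R ⧸ I) →
    ∀ (hp : p.IsPrime) (hq : q.IsPrime),
      Order.height (⟨p, hp⟩ : PrimeSpectrum R) = Order.height (⟨q, hq⟩ : PrimeSpectrum R)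
/-! ## Concrete graphs -/

/-- The 7-cycle `C₇`. -/
def C7graph : SimpleGraph (ZMod 7) := cycGraph 7

/-- Vertices of `T₁₀`. -/
inductive T10V | v | a1 | a2 | a3 | b1 | b2 | b3 | c1 | c2 | c3
deriving DecidableEq

open T10V in
instance instFintypeT10V : Fintype T10V where
  elems := {v, a1, a2, a3, b1, b2, b3, c1, c2, c3}
  complete := by intro x; cases x <;> simp

open T10V in
/-- The graph `T₁₀`. -/
def T10graph : SimpleGraph T10V := SimpleGraph.fromRel (fun x y =>
  (x, y) ∈ ([(v,a1), (v,a2), (v,a3), (a1,b1), (a2,b2), (a3,b3), (b1,c1), (b2,c2),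
    (b3,c3), (c1,c2), (c2,c3), (c3,c1)] : List (T10V × T10V)))

/-- Vertices of `Q₁₃`. -/
inductive Q13V | a1 | a2 | b1 | b2 | c1 | c2 | d1 | d2 | g1 | g2 | h | h' | v
deriving DecidableEq

open Q13V in
instance instFintypeQ13V : Fintype Q13V where
  elems := {a1, a2, b1, b2, c1, c2, d1, d2, g1, g2, h, h', v}
  complete := by intro x; cases x <;> simp

open Q13V in
/-- The graph `Q₁₃`. -/
def Q13graph : SimpleGraph Q13V := SimpleGraph.fromRel (fun x y =>
  (x, y) ∈ ([(a1,a2), (a1,d1), (a2,d2), (d1,c1), (d1,g1), (d1,h), (d2,c2), (d2,g2),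
    (d2,h), (g1,b1), (g1,h'), (g2,b2), (g2,h'), (b1,c2), (b2,c1), (h,v),
    (h',v)] : List (Q13V × Q13V)))

/-- Vertices of `P₁₃`. -/
inductive P13V | a1 | a2 | a3 | a4 | b1 | b2 | b3 | b4 | c1 | c2 | d1 | d2 | v
deriving DecidableEq

open P13V in
instance instFintypeP13V : Fintype P13V where
  elems := {a1, a2, a3, a4, b1, b2, b3, b4, c1, c2, d1, d2, v}
  complete := by intro x; cases x <;> simp

open P13V in
/-- The graph `P₁₃`. -/
def P13graph : SimpleGraph P13V := SimpleGraph.fromRel (fun x y =>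
  (x, y) ∈ ([(a1,a2), (a1,b1), (a2,b2), (a3,a4), (a3,b3), (a4,b4), (b1,c1), (b2,c1),
    (b3,c2), (b4,c2), (c1,c2), (d1,b1), (d1,b3), (d2,b2), (d2,b4), (v,d1),
    (v,d2)] : List (P13V × P13V)))

/-- Vertices of `P₁₄`. -/
inductive P14V | a1 | a2 | a3 | a4 | a5 | a6 | a7 | b1 | b2 | b3 | b4 | b5 | b6 | b7
deriving DecidableEq

open P14V in
instance instFintypeP14V : Fintype P14V where
  elems := {a1, a2, a3, a4, a5, a6, a7, b1, b2, b3, b4, b5, b6, b7}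
  complete := by intro x; cases x <;> simp

open P14V in
/-- The graph `P₁₄`. -/
def P14graph : SimpleGraph P14V := SimpleGraph.fromRel (fun x y =>
  (x, y) ∈ ([(a1,a2), (a2,a3), (a3,a4), (a4,a5), (a5,a6), (a6,a7), (a7,a1),
    (a1,b1), (a2,b2), (a3,b3), (a4,b4), (a5,b5), (a6,b6), (a7,b7),
    (b1,b3), (b2,b4), (b3,b5), (b4,b6), (b5,b7), (b6,b1), (b7,b2)] : List (P14V × P14V)))

/-- Vertices of `P₁₀`. -/
inductive P10V | a1 | a2 | b1 | b2 | c1 | c2 | d1 | d2 | g1 | g2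
deriving DecidableEq

open P10V in
instance instFintypeP10V : Fintype P10V where
  elems := {a1, a2, b1, b2, c1, c2, d1, d2, g1, g2}
  complete := by intro x; cases x <;> simp

open P10V in
/-- The graph `P₁₀`. -/
def P10graph : SimpleGraph P10V := SimpleGraph.fromRel (fun x y =>
  (x, y) ∈ ([(a1,b1), (b1,d2), (d2,d1), (d1,b2), (b2,a2), (a1,g1), (g1,d1), (g1,c1),
    (c1,c2), (c2,g2), (g2,a2), (d2,g2)] : List (P10V × P10V)))

/-!
A vertex cover meets a simplex `K` in at least `|K| - 1` vertices, a 5-cycle in at least `3`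
and an edge in at least `1`, so summing over the SCQ partition bounds `τ(G)` from below.
The bound is attained: pick a simplicial vertex in each simplex, two non-adjacent vertices of
each basic 5-cycle whose neighbourhoods lie on the cycle, and, greedily using property (P),
one endpoint of each edge of `Q` so that these endpoints are pairwise non-adjacent. The picked
vertices form a stable set whose complement meets every block in exactly its bound.
-/

open Set

section Partition

variable {V : Type} [Finite V]

lemma ncard_eq_sum_ncard_inter {P : Set (Set V)} (hP : P.PairwiseDisjoint id)
    (hcov : ⋃₀ P = univ) (X : Set V) :
    X.ncard = ∑ A ∈ P.toFinite.toFinset, (X ∩ A).ncard := by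
  have hX : X = ⋃ A ∈ P, X ∩ A := by
    rw [← inter_iUnion₂, ← sUnion_eq_biUnion, hcov, inter_univ]
  conv_lhs => rw [hX]
  rw [P.toFinite.ncard_biUnion (fun _ _ => toFinite _)
    (hP.mono_on (g := (X ∩ ·)) fun _ _ => inter_subset_right), finsum_mem_eq_finite_toFinset_sum]

end Partition

section VertexCover

variable {V : Type} {G : SimpleGraph V}

lemma tau_le_ncard {C : Set V} (hC : gVC G C) : tau G ≤ C.ncard :=
  Nat.sInf_le ⟨C, hC, rfl⟩

lemma exists_gVC_ncard_eq_tau (G : SimpleGraph V) : ∃ C, gVC G C ∧ C.ncard = tau G :=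
  Nat.sInf_mem (s := {n | ∃ C : Set V, gVC G C ∧ C.ncard = n})
    ⟨_, univ, fun u _ _ => Or.inl (mem_univ u), rfl⟩

lemma tau_eq_ncard_of_forall_le {C₀ : Set V} (hC₀ : gVC G C₀)
    (hmin : ∀ C, gVC G C → C₀.ncard ≤ C.ncard) : tau G = C₀.ncard := by
  obtain ⟨C, hC, hCτ⟩ := exists_gVC_ncard_eq_tau G
  exact le_antisymm (tau_le_ncard hC₀) (hCτ ▸ hmin C hC)

lemma gVC_compl_of_isIndepSet {I : Set V} (hI : G.IsIndepSet I) : gVC G Iᶜ := by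
  intro u v huv
  by_contra! h
  simp only [mem_compl_iff, not_not] at h
  exact hI h.1 h.2 huv.ne huv

theorem ncard_eq_tau_iff_of_partition [Finite V] {P : Set (Set V)} (hP : P.PairwiseDisjoint id)
    (hcov : ⋃₀ P = univ) (b : Set V → ℕ)
    (hb : ∀ C, gVC G C → ∀ A ∈ P, b A ≤ (C ∩ A).ncard)
    {C₀ : Set V} (hC₀ : gVC G C₀) (hC₀b : ∀ A ∈ P, (C₀ ∩ A).ncard = b A)
    {C : Set V} (hC : gVC G C) :
    C.ncard = tau G ↔ ∀ A ∈ P, (C ∩ A).ncard = b A := by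
  have hsum : ∀ C, C.ncard = ∑ A ∈ P.toFinite.toFinset, (C ∩ A).ncard :=
    ncard_eq_sum_ncard_inter hP hcov
  have hC₀sum : C₀.ncard = ∑ A ∈ P.toFinite.toFinset, b A := by
    rw [hsum]
    exact Finset.sum_congr rfl fun A hA => hC₀b A ((Finite.mem_toFinset _).1 hA)
  have hle : ∀ C, gVC G C → ∀ A ∈ P.toFinite.toFinset, b A ≤ (C ∩ A).ncard :=
    fun C hC A hA => hb C hC A ((Finite.mem_toFinset _).1 hA)
  have hτ : tau G = ∑ A ∈ P.toFinite.toFinset, b A := by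
    rw [tau_eq_ncard_of_forall_le hC₀ fun C hC => ?_, hC₀sum]
    rw [hC₀sum, hsum C]
    exact Finset.sum_le_sum (hle C hC)
  rw [hτ, hsum C, eq_comm, Finset.sum_eq_sum_iff_of_le (hle C hC)]
  simp only [Finite.mem_toFinset, eq_comm]

end VertexCover

lemma three_le_card_of_forall_mem_or_add_one_mem (S : Finset (Fin 5))
    (hS : ∀ i, i ∈ S ∨ i + 1 ∈ S) : 3 ≤ S.card := by
  revert S; decide

lemma exists_mem_and_add_two_mem_of_forall_mem_or_add_one_mem (S : Finset (Fin 5))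
    (hS : ∀ i, i ∈ S ∨ i + 1 ∈ S) : ∃ i, i ∈ S ∧ i + 2 ∈ S := by
  revert S; decide

section LocalBounds

variable {V : Type} {G : SimpleGraph V} {C : Set V}

lemma ncard_sub_one_le_ncard_inter_of_isClique [Finite V] {A : Set V} (hA : G.IsClique A)
    (hC : gVC G C) : A.ncard - 1 ≤ (C ∩ A).ncard := by
  have hAC : (A \ C).ncard ≤ 1 := (ncard_le_one (toFinite _)).2 fun a ha b hb => by
    by_contra hab
    rcases hC a b (hA ha.1 hb.1 hab) with h | h
    exacts [ha.2 h, hb.2 h]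
  have := ncard_inter_add_ncard_sdiff_eq_ncard A C (toFinite _)
  rw [inter_comm]
  omega

lemma three_le_ncard_inter_of_cycle5 {z : Fin 5 → V} (hz : Function.Injective z)
    (hadj : ∀ i, G.Adj (z i) (z (i + 1))) (hC : gVC G C) : 3 ≤ (C ∩ range z).ncard := by
  classical
  set S := Finset.univ.filter fun i => z i ∈ C
  have hS : C ∩ range z = z '' S := by
    ext x
    simp only [mem_inter_iff, mem_range, mem_image, Finset.coe_filter, Finset.mem_univ,
      true_and, S]
    constructor
    · rintro ⟨hx, i, rfl⟩
      exact ⟨i, hx, rfl⟩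
    · rintro ⟨i, hi, rfl⟩
      exact ⟨hi, i, rfl⟩
  rw [hS, ncard_image_of_injective _ hz, ncard_coe_finset]
  refine three_le_card_of_forall_mem_or_add_one_mem S fun i => ?_
  simpa [S] using hC _ _ (hadj i)

lemma one_le_ncard_inter_of_isEdgeSet {e : Set V} (he : IsEdgeSet G e) (hC : gVC G C) :
    1 ≤ (C ∩ e).ncard := by
  obtain ⟨u, v, huv, rfl⟩ := he
  rw [Nat.one_le_iff_ne_zero, Ne, ncard_eq_zero (toFinite _), ← Ne, ← nonempty_iff_ne_empty]
  rcases hC u v huv with h | h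
  exacts [⟨u, h, Or.inl rfl⟩, ⟨v, h, Or.inr rfl⟩]

end LocalBounds

section Basic5Cycle

variable {V : Type} {G : SimpleGraph V} {z : Fin 5 → V}

lemma IsInduced5Cycle.adj_succ (hz : IsInduced5Cycle G z) (i : Fin 5) :
    G.Adj (z i) (z (i + 1)) :=
  (hz.2 i (i + 1)).2 (Or.inl rfl)

lemma IsInduced5Cycle.not_adj_add_two (hz : IsInduced5Cycle G z) (i : Fin 5) :
    ¬ G.Adj (z i) (z (i + 2)) := fun h =>
  (by decide : ∀ j : Fin 5, ¬ (j + 2 = j + 1 ∨ j = j + 2 + 1)) i ((hz.2 i (i + 2)).1 h)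

lemma IsInduced5Cycle.ncard_range (hz : IsInduced5Cycle G z) : (range z).ncard = 5 := by
  rw [← image_univ, ncard_image_of_injective _ hz.1, ncard_univ, Nat.card_eq_fintype_card,
    Fintype.card_fin]

lemma IsInduced5Cycle.three_le_gdeg [Finite V] (hz : IsInduced5Cycle G z) {i : Fin 5}
    (hi : ¬ G.neighborSet (z i) ⊆ range z) : 3 ≤ gdeg G (z i) := by
  obtain ⟨y, hy, hyz⟩ := not_subset.1 hi
  have hpred : G.Adj (z i) (z (i - 1)) := (hz.2 i (i - 1)).2 (Or.inr (sub_add_cancel i 1).symm)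
  have hne : z (i + 1) ≠ z (i - 1) := fun h =>
    (by decide : ∀ j : Fin 5, j + 1 ≠ j - 1) i (hz.1 h)
  have hsub : ({z (i + 1), z (i - 1), y} : Set V) ⊆ G.neighborSet (z i) := by
    rintro x (rfl | rfl | rfl)
    exacts [hz.adj_succ i, hpred, hy]
  calc 3 = ({z (i + 1), z (i - 1), y} : Set V).ncard :=
        (ncard_eq_three.2 ⟨_, _, _, hne, fun h => hyz ⟨_, h⟩,
          fun h => hyz ⟨_, h⟩, rfl⟩).symm
    _ ≤ gdeg G (z i) := ncard_le_ncard hsub (toFinite _)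

/-- No two consecutive vertices of a basic 5-cycle have neighbours off the cycle. -/
lemma IsBasic5Cycle.exists_neighborSet_subset_range [Finite V] (hz : IsBasic5Cycle G z) :
    ∃ i, G.neighborSet (z i) ⊆ range z ∧ G.neighborSet (z (i + 2)) ⊆ range z := by
  classical
  set S := Finset.univ.filter fun i => G.neighborSet (z i) ⊆ range z
  obtain ⟨i, hi, hi2⟩ := exists_mem_and_add_two_mem_of_forall_mem_or_add_one_mem S fun i => by
    by_contra! h
    simp only [Finset.mem_filter, Finset.mem_univ, true_and, S] at h
    exact hz.2 i ⟨hz.1.three_le_gdeg h.1, hz.1.three_le_gdeg h.2⟩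
  simp only [Finset.mem_filter, Finset.mem_univ, true_and, S] at hi hi2
  exact ⟨i, hi, hi2⟩

lemma basic5Sets_disjoint_simplexSets : Disjoint (Basic5Sets G) (SimplexSets G) := by
  rw [Set.disjoint_left]
  rintro _ ⟨z, hz, rfl⟩ ⟨v, hv, hvz⟩
  have hz0 : z 0 ∈ insert v (G.neighborSet v) := hvz ▸ mem_range_self 0
  have hz2 : z 2 ∈ insert v (G.neighborSet v) := hvz ▸ mem_range_self 2
  exact hz.1.not_adj_add_two 0 (hv hz0 hz2 fun h => (by decide : (0 : Fin 5) ≠ 2) (hz.1.1 h))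

end Basic5Cycle

section Greedy

variable {V : Type} {G : SimpleGraph V}

/-- Property (P) is what makes the greedy choice possible: if both ends of a new edge had a
neighbour in the stable set built so far, those two neighbours would be adjacent. -/
lemma exists_isIndepSet_ncard_inter_eq_one [Finite V] {Q : Set (Set V)}
    (hQ : Q.PairwiseDisjoint id) (hedge : ∀ e ∈ Q, IsEdgeSet G e)
    (hP : ∀ e ∈ Q, PropP G e) :
    ∃ J, G.IsIndepSet J ∧ ∀ e ∈ Q, (J ∩ e).ncard = 1 := by
  suffices ∃ J ⊆ ⋃₀ Q, G.IsIndepSet J ∧ ∀ e ∈ Q, (J ∩ e).ncard = 1 by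
    obtain ⟨J, -, hJ⟩ := this
    exact ⟨J, hJ⟩
  refine Finite.induction_on_subset (motive := fun S _ =>
    ∃ J ⊆ ⋃₀ S, G.IsIndepSet J ∧ ∀ e ∈ S, (J ∩ e).ncard = 1) Q (toFinite Q)
    ⟨∅, empty_subset _, pairwise_empty _, fun _ h => h.elim⟩ ?_
  intro e S he hSQ heS ⟨J, hJS, hJ, hJcard⟩
  have hdisj : ∀ f ∈ S, Disjoint e f := fun f hf =>
    hQ he (hSQ hf) fun h => heS (h ▸ hf)
  have hJe : Disjoint J e := by
    rw [disjoint_left]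
    intro x hxJ hxe
    obtain ⟨f, hf, hxf⟩ := hJS hxJ
    exact disjoint_left.1 (hdisj f hf) hxe hxf
  obtain ⟨t, hte, ht⟩ : ∃ t ∈ e, ∀ x ∈ J, ¬ G.Adj x t := by
    obtain ⟨u, v, -, rfl⟩ := hedge e he
    by_contra! h
    obtain ⟨x, hx, hxu⟩ := h u (mem_insert _ _)
    obtain ⟨y, hy, hyv⟩ := h v (mem_insert_of_mem _ rfl)
    have hxy := hP _ he x u y v rfl hxu hyv (disjoint_left.1 hJe hx) (disjoint_left.1 hJe hy)
    exact hJ hx hy hxy.ne hxy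
  refine ⟨insert t J, ?_, hJ.insert fun y hy _ => ⟨fun h => ht y hy h.symm, ht y hy⟩, ?_⟩
  · exact insert_subset ⟨e, mem_insert _ _, hte⟩
      (hJS.trans (sUnion_mono (subset_insert _ _)))
  · rintro f (rfl | hf)
    · rw [insert_inter_of_mem hte, hJe.inter_eq, insert_empty_eq, ncard_singleton]
    · rw [insert_inter_of_notMem (disjoint_left.1 (hdisj f hf) hte)]
      exact hJcard f hf

end Greedy

section Glue

variable {V : Type} {G : SimpleGraph V} {P : Set (Set V)} {I : Set V → Set V}

lemma isIndepSet_biUnion (hP : P.PairwiseDisjoint id) {J : Set V} (hJ : G.IsIndepSet J)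
    (hIA : ∀ A ∈ P, I A ⊆ A) (hI : ∀ A ∈ P, G.IsIndepSet (I A))
    (hloc : ∀ A ∈ P, (∀ x ∈ I A, G.neighborSet x ⊆ A) ∨ I A ⊆ J) :
    G.IsIndepSet (⋃ A ∈ P, I A) := by
  intro x hx y hy hne hxy
  simp only [mem_iUnion₂] at hx hy
  obtain ⟨A, hA, hxA⟩ := hx
  obtain ⟨B, hB, hyB⟩ := hy
  obtain rfl | hAB := eq_or_ne A B
  · exact hI A hA hxA hyB hne hxy
  have hdisj : Disjoint A B := hP hA hB hAB
  rcases hloc A hA with hAcl | hAJ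
  · exact disjoint_left.1 hdisj (hAcl x hxA hxy) (hIA B hB hyB)
  rcases hloc B hB with hBcl | hBJ
  · exact disjoint_left.1 hdisj (hIA A hA hxA) (hBcl y hyB hxy.symm)
  · exact hJ (hAJ hxA) (hBJ hyB) hne hxy

lemma inter_biUnion_of_pairwiseDisjoint (hP : P.PairwiseDisjoint id)
    (hIA : ∀ A ∈ P, I A ⊆ A) {A : Set V} (hA : A ∈ P) : A ∩ ⋃ B ∈ P, I B = I A := by
  refine Subset.antisymm ?_ fun x hx => ⟨hIA A hA hx, mem_biUnion hA hx⟩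
  rintro x ⟨hxA, hx⟩
  obtain ⟨B, hB, hxB⟩ := mem_iUnion₂.1 hx
  obtain rfl | hAB := eq_or_ne A B
  · exact hxB
  · exact (disjoint_left.1 (hP hA hB hAB) hxA (hIA B hB hxB)).elim

end Glue

section SCQ

variable {V : Type} {G : SimpleGraph V}

lemma IsEdgeSet.ncard_eq_two {e : Set V} (he : IsEdgeSet G e) : e.ncard = 2 := by
  obtain ⟨u, v, huv, rfl⟩ := he
  exact ncard_pair huv.ne

open Classical in
/-- The least number of vertices a vertex cover can have in a block of an SCQ partition; the
last branch is for the edges of `Q`. -/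
noncomputable def scqPartBound (G : SimpleGraph V) (A : Set V) : ℕ :=
  if A ∈ SimplexSets G then A.ncard - 1 else if A ∈ Basic5Sets G then 3 else 1

lemma scqPartBound_of_mem_simplexSets {A : Set V} (hA : A ∈ SimplexSets G) :
    scqPartBound G A = A.ncard - 1 :=
  if_pos hA

lemma scqPartBound_of_mem_basic5Sets {A : Set V} (hA : A ∈ Basic5Sets G) :
    scqPartBound G A = 3 := by
  rw [scqPartBound, if_neg (disjoint_left.1 basic5Sets_disjoint_simplexSets hA), if_pos hA]

lemma scqPartBound_of_isEdgeSet {e : Set V} (he : IsEdgeSet G e) : scqPartBound G e = 1 := by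
  unfold scqPartBound
  split_ifs with hS hB
  · rw [he.ncard_eq_two]
  · obtain ⟨z, hz, rfl⟩ := hB
    have := hz.1.ncard_range
    rw [he.ncard_eq_two] at this
    omega
  · rfl

variable {Q : Set (Set V)}

lemma scqPartBound_le_ncard_inter [Finite V] (hedge : ∀ e ∈ Q, IsEdgeSet G e) {A : Set V}
    (hA : A ∈ SimplexSets G ∪ Basic5Sets G ∪ Q) {C : Set V} (hC : gVC G C) :
    scqPartBound G A ≤ (C ∩ A).ncard := by
  rcases hA with (hS | hB) | hQ
  · rw [scqPartBound_of_mem_simplexSets hS]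
    obtain ⟨v, hv, rfl⟩ := hS
    exact ncard_sub_one_le_ncard_inter_of_isClique hv hC
  · rw [scqPartBound_of_mem_basic5Sets hB]
    obtain ⟨z, hz, rfl⟩ := hB
    exact three_le_ncard_inter_of_cycle5 hz.1.1 hz.1.adj_succ hC
  · rw [scqPartBound_of_isEdgeSet (hedge A hQ)]
    exact one_le_ncard_inter_of_isEdgeSet (hedge A hQ) hC

lemma exists_isIndepSet_ncard_sdiff_eq_scqPartBound [Finite V]
    (hedge : ∀ e ∈ Q, IsEdgeSet G e) {J : Set V} (hJ : G.IsIndepSet J)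
    (hJe : ∀ e ∈ Q, (J ∩ e).ncard = 1) {A : Set V}
    (hA : A ∈ SimplexSets G ∪ Basic5Sets G ∪ Q) :
    ∃ I ⊆ A, G.IsIndepSet I ∧ (A \ I).ncard = scqPartBound G A ∧
      ((∀ x ∈ I, G.neighborSet x ⊆ A) ∨ I ⊆ J) := by
  rcases hA with (hS | hB) | hQ
  · rw [scqPartBound_of_mem_simplexSets hS]
    obtain ⟨v, -, rfl⟩ := hS
    refine ⟨{v}, singleton_subset_iff.2 (mem_insert _ _), pairwise_singleton _ _,
      ncard_sdiff_singleton_of_mem (mem_insert _ _), Or.inl ?_⟩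
    rintro x rfl
    exact subset_insert _ _
  · rw [scqPartBound_of_mem_basic5Sets hB]
    obtain ⟨z, hz, rfl⟩ := hB
    obtain ⟨i, hi, hi2⟩ := hz.exists_neighborSet_subset_range
    have hsub : {z i, z (i + 2)} ⊆ range z := pair_subset (mem_range_self _) (mem_range_self _)
    have hne : z i ≠ z (i + 2) := fun h =>
      (by decide : ∀ j : Fin 5, j ≠ j + 2) i (hz.1.1 h)
    refine ⟨_, hsub, pairwise_pair.2 fun _ =>
        ⟨hz.1.not_adj_add_two i, fun h => hz.1.not_adj_add_two i h.symm⟩, ?_, Or.inl ?_⟩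
    · rw [ncard_sdiff hsub, hz.1.ncard_range, ncard_pair hne]
    · rintro x (rfl | rfl)
      exacts [hi, hi2]
  · rw [scqPartBound_of_isEdgeSet (hedge A hQ)]
    refine ⟨J ∩ A, inter_subset_right, hJ.mono inter_subset_left, ?_,
      Or.inr inter_subset_left⟩
    rw [ncard_sdiff inter_subset_right, (hedge A hQ).ncard_eq_two, hJe A hQ]

lemma exists_gVC_ncard_inter_eq_scqPartBound [Finite V]
    (hP : (SimplexSets G ∪ Basic5Sets G ∪ Q).PairwiseDisjoint id)
    (hedge : ∀ e ∈ Q, IsEdgeSet G e) (hQP : ∀ e ∈ Q, PropP G e) :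
    ∃ C₀, gVC G C₀ ∧
      ∀ A ∈ SimplexSets G ∪ Basic5Sets G ∪ Q, (C₀ ∩ A).ncard = scqPartBound G A := by
  obtain ⟨J, hJ, hJe⟩ :=
    exists_isIndepSet_ncard_inter_eq_one (hP.subset subset_union_right) hedge hQP
  choose! I hIA hI hIcard hloc using
    fun A (hA : A ∈ SimplexSets G ∪ Basic5Sets G ∪ Q) =>
      exists_isIndepSet_ncard_sdiff_eq_scqPartBound hedge hJ hJe hA
  refine ⟨_, gVC_compl_of_isIndepSet (isIndepSet_biUnion hP hJ hIA hI hloc), fun A hA => ?_⟩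
  rw [← sdiff_eq_compl_inter, ← sdiff_self_inter, inter_biUnion_of_pairwiseDisjoint hP hIA hA,
    hIcard A hA]

end SCQ

lemma WOGraph.IsVC.gVC_graph {V : Type} {D : WOGraph V} {C : Set V} (hC : D.IsVC C) :
    gVC D.graph C := by
  intro u v huv
  rcases ((SimpleGraph.fromRel_adj _ _ _).1 huv).2 with h | h
  exacts [hC u v h, (hC v u h).symm]

/-- Lemma `lemma-08ene`. -/
theorem stmt10 {V : Type} [Fintype V] (D : WOGraph V) (Q : Set (Set V))
    (hscq : IsSCQ D Q) (C : Set V) (hC : D.IsVC C) :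
    C.ncard = tau D.graph ↔
      ((∀ K ∈ SimplexSets D.graph, (C ∩ K).ncard = K.ncard - 1) ∧
       (∀ B ∈ Basic5Sets D.graph, (C ∩ B).ncard = 3) ∧
       (∀ e ∈ Q, (C ∩ e).ncard = 1)) := by
  obtain ⟨hQ, hdisj, hcov⟩ := hscq
  have hP : (SimplexSets D.graph ∪ Basic5Sets D.graph ∪ Q).PairwiseDisjoint id :=
    fun A hA B hB hAB => (hdisj A hA B hB).resolve_left hAB
  have hQedge : ∀ e ∈ Q, IsEdgeSet D.graph e ∧ PropP D.graph e := by
    rcases hQ with rfl | ⟨⟨hedge, -⟩, hQP⟩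
    · simp
    · exact fun e he => ⟨hedge e he, hQP e he⟩
  have hedge := fun e he => (hQedge e he).1
  obtain ⟨C₀, hC₀, hC₀b⟩ :=
    exists_gVC_ncard_inter_eq_scqPartBound hP hedge fun e he => (hQedge e he).2
  rw [ncard_eq_tau_iff_of_partition hP hcov _
    (fun C hC A hA => scqPartBound_le_ncard_inter hedge hA hC) hC₀ hC₀b hC.gVC_graph]
  simp only [mem_union, or_imp, forall_and, and_assoc]
  refine and_congr ?_ (and_congr ?_ ?_) <;> refine forall₂_congr fun A hA => ?_
  · rw [scqPartBound_of_mem_simplexSets hA]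
  · rw [scqPartBound_of_mem_basic5Sets hA]
  · rw [scqPartBound_of_isEdgeSet (hedge A hA)]
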